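/- arXiv:1109.4335 — 2 statements merged into one kernel-verified Lean document; each statement's English description precedes it below -/
import Mathlib

section
/- Assume v(p_{xy}) + v(p_{yx}) ≤ 1 for all distinct x, y ∈ I and initial values v(t_x) = v(¬t_x) = 0 for all x. Let G ⊆ I be the minimal majority-dominant set, i.e., G is nonempty, v(p_{xy}) > 1/2 for every x ∈ G and y ∉ G, and no nonempty proper subset X ⊊ G satisfies v(p_{xy}) > 1/2 for every x ∈ X and y ∈ I \ X. Then the upper revised valuation v* satisfies: v*(¬t_y) > 1/2 for every y ∉ G; v*(¬t_x) ≤ 1/2 for every x ∈ G; and v*(t_y) ≤ 1/2 for every y ∉ G. Consequently every comprehensive prominence winner (every x with v*(t_x) ≥ v*(¬t_x)) belongs to G. -/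
/-- A valuation for prominence doctrines: degrees of belief for the literals
`t_x` ("x is prominent"), `¬t_x`, and `p_{xy}` ("x is preferable to y", for
distinct `x, y`), under the identification `¬p_{xy} = p_{yx}`. -/
structure PVal (I : Type*) where
  t : I → ℝ
  nt : I → ℝ
  p : I → I → ℝ

/-- Max over a (possibly empty) index set of reals: the empty max is `0`
(note `Real.sSup_empty = 0`). -/
noncomputable def sup0 (S : Set ℝ) : ℝ := sSup S

open Classical in
/-- Min over a (possibly empty) index set of reals: the empty min is `1`. -/
noncomputable def inf1 (S : Set ℝ) : ℝ := if S.Nonempty then sInf S else 1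

/-- The one-step revision operator associated with the comprehensive prominence
doctrine, whose clauses are indexed by (nonempty) subsets `X ⊆ I`:
`⋁_{r ∈ X} t_r ∨ ⋁_{r ∈ X, s ∉ X} p_{sr}`, `¬t_y ∨ ⋁_{r ∈ X, s ∉ X} p_{sr}`
for `y ∉ X`, and `¬t_x ∨ ¬t_y`; the min over an empty index set is `1` and
the max over an empty index set is `0`. -/
noncomputable def Tcp {I : Type*} (v : PVal I) : PVal I where
  t := fun x => max (v.t x)
    (sup0 {a : ℝ | ∃ X : Finset I, x ∈ X ∧
      a = min (inf1 {b : ℝ | ∃ r ∈ X, r ≠ x ∧ b = v.nt r})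
              (inf1 {b : ℝ | ∃ r ∈ X, ∃ s, s ∉ X ∧ b = v.p r s})})
  nt := fun y => max (v.nt y)
    (max (sup0 {a : ℝ | ∃ r, r ≠ y ∧ a = v.t r})
         (sup0 {a : ℝ | ∃ X : Finset I, X.Nonempty ∧ y ∉ X ∧
           a = inf1 {b : ℝ | ∃ r ∈ X, ∃ s, s ∉ X ∧ b = v.p r s}}))
  p := fun u w => max (v.p u w)
    (sup0 {a : ℝ | ∃ X : Finset I, w ∈ X ∧ u ∉ X ∧
      a = min (max (inf1 {b : ℝ | ∃ r ∈ X, b = v.nt r})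
                   (sup0 {b : ℝ | ∃ s, s ∉ X ∧ b = v.t s}))
              (inf1 {b : ℝ | ∃ r ∈ X, ∃ s, s ∉ X ∧ ¬(r = w ∧ s = u) ∧
                b = v.p r s})})


/-!
The bound `1/2` is an invariant of the revision. Call a valuation half-bounded for `G` if
`t_x ≤ 1/2` unless `G = {x}`, `¬t_x ≤ 1/2` for `x ∈ G`, and every nonempty `X` not containing
`G` has some `p_{rs} ≤ 1/2` with `r ∈ X` and `s ∈ G \ X`. Minimality of `G` together with
`p_{xy} + p_{yx} ≤ 1` makes `v` half-bounded, and for a half-bounded valuation every clause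
revising a bounded literal has a premise `≤ 1/2`, so `v*` is half-bounded too. On the other hand
`X = G` already gives `(Tv)(¬t_y) > 1/2` for `y ∉ G`, and the iterates only increase.
-/

open Finset

lemma inf1_le {S : Set ℝ} (hS : S.Finite) {a : ℝ} (ha : a ∈ S) : inf1 S ≤ a := by
  rw [inf1, if_pos ⟨a, ha⟩]
  exact csInf_le hS.bddBelow ha

lemma lt_inf1 {S : Set ℝ} (hS : S.Finite) {c : ℝ} (hc : c < 1) (h : ∀ b ∈ S, c < b) :
    c < inf1 S := by
  rw [inf1]
  split_ifs with hne
  · exact h _ (hne.csInf_mem hS)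
  · exact hc

lemma le_sup0 {S : Set ℝ} (hS : S.Finite) {a : ℝ} (ha : a ∈ S) : a ≤ sup0 S :=
  le_csSup hS.bddAbove ha

lemma sup0_le {S : Set ℝ} {c : ℝ} (hc : 0 ≤ c) (h : ∀ a ∈ S, a ≤ c) : sup0 S ≤ c :=
  Real.sSup_le h hc

section Revision

variable {I : Type*}

lemma finite_setOf_p_cut [Finite I] (w : PVal I) (X : Finset I) :
    {b : ℝ | ∃ r ∈ X, ∃ s, s ∉ X ∧ b = w.p r s}.Finite :=
  (Set.finite_range fun rs : I × I => w.p rs.1 rs.2).subset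
    fun _ ⟨r, _, s, _, hb⟩ => ⟨(r, s), hb.symm⟩

lemma inf1_p_cut_le [Finite I] (w : PVal I) {X : Finset I} {r s : I} (hr : r ∈ X) (hs : s ∉ X) :
    inf1 {b : ℝ | ∃ r ∈ X, ∃ s, s ∉ X ∧ b = w.p r s} ≤ w.p r s :=
  inf1_le (finite_setOf_p_cut w X) ⟨r, hr, s, hs, rfl⟩

lemma inf1_nt_le [Finite I] (w : PVal I) {X : Finset I} {r : I} (hr : r ∈ X) :
    inf1 {b : ℝ | ∃ r ∈ X, b = w.nt r} ≤ w.nt r :=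
  inf1_le ((Set.finite_range w.nt).subset (by rintro _ ⟨r, -, rfl⟩; exact ⟨r, rfl⟩)) ⟨r, hr, rfl⟩

lemma inf1_nt_ne_le [Finite I] (w : PVal I) {X : Finset I} {x r : I} (hr : r ∈ X) (hrx : r ≠ x) :
    inf1 {b : ℝ | ∃ r ∈ X, r ≠ x ∧ b = w.nt r} ≤ w.nt r :=
  inf1_le ((Set.finite_range w.nt).subset (by rintro _ ⟨r, -, -, rfl⟩; exact ⟨r, rfl⟩))
    ⟨r, hr, hrx, rfl⟩

structure HalfBounded (G : Finset I) (w : PVal I) : Prop where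
  t_le : ∀ ⦃g⦄, g ∈ G → ∀ ⦃x⦄, g ≠ x → w.t x ≤ 1 / 2
  nt_le : ∀ ⦃x⦄, x ∈ G → w.nt x ≤ 1 / 2
  exists_p_le : ∀ X : Finset I, X.Nonempty → ¬G ⊆ X →
    ∃ r ∈ X, ∃ s ∈ G, s ∉ X ∧ w.p r s ≤ 1 / 2

namespace HalfBounded

variable [Finite I] {G : Finset I} {w : PVal I}

lemma tcp_t_le (h : HalfBounded G w) {g x : I} (hg : g ∈ G) (hgx : g ≠ x) :
    (Tcp w).t x ≤ 1 / 2 := by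
  refine max_le (h.t_le hg hgx) (sup0_le (by norm_num) ?_)
  rintro a ⟨X, hxX, rfl⟩
  by_cases hGX : G ⊆ X
  · exact min_le_of_left_le ((inf1_nt_ne_le w (hGX hg) hgx).trans (h.nt_le hg))
  · obtain ⟨r, hr, s, -, hs, hp⟩ := h.exists_p_le X ⟨x, hxX⟩ hGX
    exact min_le_of_right_le ((inf1_p_cut_le w hr hs).trans hp)

lemma tcp_nt_le (h : HalfBounded G w) {x : I} (hx : x ∈ G) : (Tcp w).nt x ≤ 1 / 2 := by
  refine max_le (h.nt_le hx) (max_le (sup0_le (by norm_num) ?_) (sup0_le (by norm_num) ?_))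
  · rintro a ⟨r, hrx, rfl⟩
    exact h.t_le hx hrx.symm
  · rintro a ⟨X, hX, hxX, rfl⟩
    obtain ⟨r, hr, s, -, hs, hp⟩ := h.exists_p_le X hX fun hGX => hxX (hGX hx)
    exact (inf1_p_cut_le w hr hs).trans hp

/-- A clause raising `p_{rs}` uses some `X ∋ s`; as `s ∈ G`, both `¬t_s` and every `t_{s'}`
with `s' ∉ X` are `≤ 1/2`, so its premise `min_{X} ¬t ∨ max_{∉ X} t` is `≤ 1/2`. -/
lemma tcp_p_le (h : HalfBounded G w) {r s : I} (hs : s ∈ G) (hp : w.p r s ≤ 1 / 2) :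
    (Tcp w).p r s ≤ 1 / 2 := by
  refine max_le hp (sup0_le (by norm_num) ?_)
  rintro a ⟨X, hsX, -, rfl⟩
  refine min_le_of_left_le (max_le ((inf1_nt_le w hsX).trans (h.nt_le hs)) ?_)
  refine sup0_le (by norm_num) ?_
  rintro b ⟨s', hs', rfl⟩
  exact h.t_le hs (ne_of_mem_of_not_mem hsX hs')

lemma tcp (h : HalfBounded G w) : HalfBounded G (Tcp w) where
  t_le _ hg _ hgx := h.tcp_t_le hg hgx
  nt_le _ hx := h.tcp_nt_le hx
  exists_p_le X hX hGX := by
    obtain ⟨r, hr, s, hs, hsX, hp⟩ := h.exists_p_le X hX hGX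
    exact ⟨r, hr, s, hs, hsX, h.tcp_p_le hs hp⟩

lemma iterate (h : HalfBounded G w) (n : ℕ) : HalfBounded G (Tcp^[n] w) := by
  induction n with
  | zero => exact h
  | succ n ih =>
    rw [Function.iterate_succ_apply']
    exact ih.tcp

end HalfBounded

lemma exists_p_le_half_of_minimal_dominant [DecidableEq I] {p : I → I → ℝ} {G : Finset I}
    (hsum : ∀ x y : I, x ≠ y → p x y + p y x ≤ 1)
    (hdom : ∀ x ∈ G, ∀ y ∉ G, 1 / 2 < p x y)
    (hmin : ∀ X : Finset I, X.Nonempty → X ⊂ G → ¬(∀ x ∈ X, ∀ y ∉ X, 1 / 2 < p x y))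
    {X : Finset I} (hX : X.Nonempty) (hGX : ¬G ⊆ X) :
    ∃ r ∈ X, ∃ s ∈ G, s ∉ X ∧ p r s ≤ 1 / 2 := by
  obtain ⟨g, hg, hgX⟩ := not_subset.mp hGX
  by_cases hXG : (X ∩ G).Nonempty
  · have hsub : X ∩ G ⊂ G :=
      inter_subset_right.ssubset_of_not_superset fun hG => hgX (mem_of_mem_inter_left (hG hg))
    have hweak := hmin _ hXG hsub
    push Not at hweak
    obtain ⟨r, hr, s, hs, hp⟩ := hweak
    rw [mem_inter] at hr
    have hsG : s ∈ G := by
      by_contra hsG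
      exact (hdom r hr.2 s hsG).not_ge hp
    exact ⟨r, hr.1, s, hsG, fun hsX => hs (mem_inter.2 ⟨hsX, hsG⟩), hp⟩
  · obtain ⟨r, hr⟩ := hX
    have hrG : r ∉ G := fun hrG => hXG ⟨r, mem_inter.2 ⟨hr, hrG⟩⟩
    refine ⟨r, hr, g, hg, hgX, ?_⟩
    linarith [hdom g hg r hrG, hsum r g (ne_of_mem_of_not_mem hg hrG).symm]

lemma half_lt_tcp_nt [Finite I] {w : PVal I} {G : Finset I} (hG : G.Nonempty)
    (hdom : ∀ x ∈ G, ∀ y ∉ G, 1 / 2 < w.p x y) {y : I} (hy : y ∉ G) :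
    1 / 2 < (Tcp w).nt y := by
  let cut := fun X : Finset I => inf1 {b : ℝ | ∃ r ∈ X, ∃ s, s ∉ X ∧ b = w.p r s}
  have hfin : {a : ℝ | ∃ X : Finset I, X.Nonempty ∧ y ∉ X ∧ a = cut X}.Finite :=
    (Set.finite_range cut).subset fun _ ⟨X, _, _, ha⟩ => ⟨X, ha.symm⟩
  calc 1 / 2 < cut G :=
        lt_inf1 (finite_setOf_p_cut w G) (by norm_num) fun _ ⟨r, hr, s, hs, hb⟩ =>
          hb ▸ hdom r hr s hs
    _ ≤ sup0 {a : ℝ | ∃ X : Finset I, X.Nonempty ∧ y ∉ X ∧ a = cut X} :=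
        le_sup0 hfin ⟨G, hG, hy, rfl⟩
    _ ≤ (Tcp w).nt y := (le_max_right _ _).trans (le_max_right _ _)

lemma monotone_tcp_iterate_nt (w : PVal I) (y : I) : Monotone fun n => (Tcp^[n] w).nt y :=
  monotone_nat_of_le_succ fun n => by
    rw [Function.iterate_succ_apply']
    exact le_max_left _ _

end Revision

theorem stmt16_general {I : Type*} [Fintype I] [DecidableEq I]
    (v : PVal I)
    (hsum : ∀ x y : I, x ≠ y → v.p x y + v.p y x ≤ 1)
    (ht : ∀ x, v.t x = 0) (hnt : ∀ x, v.nt x = 0)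
    (vstar : PVal I) (hstar : ∃ N : ℕ, ∀ n ≥ N, Tcp^[n] v = vstar)
    (G : Finset I) (hGne : G.Nonempty)
    (hGdom : ∀ x ∈ G, ∀ y ∉ G, 1 / 2 < v.p x y)
    (hGmin : ∀ X : Finset I, X.Nonempty → X ⊂ G →
      ¬(∀ x ∈ X, ∀ y ∉ X, 1 / 2 < v.p x y)) :
    (∀ y ∉ G, 1 / 2 < vstar.nt y) ∧
    (∀ x ∈ G, vstar.nt x ≤ 1 / 2) ∧
    (∀ y ∉ G, vstar.t y ≤ 1 / 2) ∧
    (∀ x : I, vstar.nt x ≤ vstar.t x → x ∈ G) := by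
  obtain ⟨N, hN⟩ := hstar
  have hv : HalfBounded G v :=
    { t_le := fun _ _ x _ => by simp [ht x]
      nt_le := fun x _ => by simp [hnt x]
      exists_p_le := fun _ hX hGX =>
        exists_p_le_half_of_minimal_dominant hsum hGdom hGmin hX hGX }
  have hvstar : HalfBounded G vstar := hN N le_rfl ▸ hv.iterate N
  have hnt_out : ∀ y ∉ G, 1 / 2 < vstar.nt y := fun y hy =>
    calc 1 / 2 < (Tcp^[1] v).nt y := half_lt_tcp_nt hGne hGdom hy
      _ ≤ (Tcp^[N + 1] v).nt y := monotone_tcp_iterate_nt v y (by omega)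
      _ = vstar.nt y := by rw [hN (N + 1) (by omega)]
  have ht_out : ∀ y ∉ G, vstar.t y ≤ 1 / 2 := fun y hy =>
    hvstar.t_le hGne.choose_spec (ne_of_mem_of_not_mem hGne.choose_spec hy)
  refine ⟨hnt_out, fun x hx => hvstar.nt_le hx, ht_out, fun x hx => ?_⟩
  by_contra hxG
  linarith [hnt_out x hxG, ht_out x hxG]

/-- The minimal majority-dominant set `G` satisfies: `v*(¬t_y) > 1/2` for
`y ∉ G`, `v*(¬t_x) ≤ 1/2` for `x ∈ G`, and `v*(t_y) ≤ 1/2` for `y ∉ G`;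
consequently every comprehensive prominence winner belongs to `G`. -/
theorem stmt16 {I : Type*} [Fintype I] [DecidableEq I]
    (hcard : 2 ≤ Fintype.card I)
    (v : PVal I)
    (hbox : ∀ x y : I, x ≠ y → v.p x y ∈ Set.Icc (0:ℝ) 1)
    (hsum : ∀ x y : I, x ≠ y → v.p x y + v.p y x ≤ 1)
    (ht : ∀ x, v.t x = 0) (hnt : ∀ x, v.nt x = 0)
    (vstar : PVal I) (hstar : ∃ N : ℕ, ∀ n ≥ N, Tcp^[n] v = vstar)
    (G : Finset I) (hGne : G.Nonempty)
    (hGdom : ∀ x ∈ G, ∀ y ∉ G, 1 / 2 < v.p x y)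
    (hGmin : ∀ X : Finset I, X.Nonempty → X ⊂ G →
      ¬(∀ x ∈ X, ∀ y ∉ X, 1 / 2 < v.p x y)) :
    (∀ y ∉ G, 1 / 2 < vstar.nt y) ∧
    (∀ x ∈ G, vstar.nt x ≤ 1 / 2) ∧
    (∀ y ∉ G, vstar.t y ≤ 1 / 2) ∧
    (∀ x : I, vstar.nt x ≤ vstar.t x → x ∈ G) :=
  stmt16_general v hsum ht hnt vstar hstar G hGne hGdom hGmin
end

section
/- For the comprehensive prominence doctrine with initial values v(t_x) = v(¬t_x) = 0 for all x ∈ I: if there is a unique comprehensive prominence winner x, i.e., the upper revised valuation satisfies v*(t_x) > v*(¬t_x), then x is also the unique maximin winner: min over s ≠ x of v(p_{xs}) > min over s ≠ y of v(p_{ys}) for every y ≠ x. -/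
section SupInf

lemma finite_setOf_exists_and_eq {β : Type*} [Finite β] {P : β → Prop} {f : β → ℝ} :
    {a | ∃ i, P i ∧ a = f i}.Finite :=
  (Set.finite_range f).subset (by rintro _ ⟨i, -, rfl⟩; exact ⟨i, rfl⟩)

lemma finite_setOf_exists_and_and_eq {β : Type*} [Finite β] {P Q : β → Prop} {f : β → ℝ} :
    {a | ∃ i, P i ∧ Q i ∧ a = f i}.Finite :=
  (Set.finite_range f).subset (by rintro _ ⟨i, -, -, rfl⟩; exact ⟨i, rfl⟩)

variable {S : Set ℝ} {a b : ℝ}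

lemma le_sup0_s18 (hS : BddAbove S) (hb : b ∈ S) : b ≤ sup0 S :=
  le_csSup hS hb

lemma exists_le_of_le_sup0 (hS : S.Finite) (ha : 0 < a) (h : a ≤ sup0 S) : ∃ b ∈ S, a ≤ b := by
  rcases S.eq_empty_or_nonempty with rfl | hne
  · rw [sup0, Real.sSup_empty] at h
    exact absurd h (not_le.2 ha)
  · exact ⟨sSup S, hne.csSup_mem hS, h⟩

lemma inf1_le_s18 (hS : BddBelow S) (hb : b ∈ S) : inf1 S ≤ b := by
  rw [inf1, if_pos ⟨b, hb⟩]
  exact csInf_le hS hb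

lemma le_inf1 (hne : S.Nonempty) (h : ∀ b ∈ S, a ≤ b) : a ≤ inf1 S := by
  rw [inf1, if_pos hne]
  exact le_csInf hne h

lemma exists_lt_of_inf1_lt (hne : S.Nonempty) (h : inf1 S < a) : ∃ b ∈ S, b < a := by
  rw [inf1, if_pos hne] at h
  exact exists_lt_of_csInf_lt hne h

end SupInf

namespace PVal

variable {I : Type*}

instance : Preorder (PVal I) where
  le a b := a.t ≤ b.t ∧ a.nt ≤ b.nt ∧ a.p ≤ b.p
  le_refl _ := ⟨le_rfl, le_rfl, le_rfl⟩
  le_trans _ _ _ h₁ h₂ := ⟨h₁.1.trans h₂.1, h₁.2.1.trans h₂.2.1, h₁.2.2.trans h₂.2.2⟩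

end PVal

open Function

lemma isFixedPt_of_iterate_eventually_eq {α : Type*} {f : α → α} {a b : α}
    (h : ∃ N, ∀ n ≥ N, f^[n] a = b) : IsFixedPt f b := by
  obtain ⟨N, hN⟩ := h
  calc f b = f (f^[N] a) := by rw [hN N le_rfl]
    _ = f^[N + 1] a := (iterate_succ_apply' f N a).symm
    _ = b := hN (N + 1) N.le_succ

lemma iterate_le_of_eventually_eq {α : Type*} [Preorder α] {f : α → α} (hf : id ≤ f) {a b : α}
    (h : ∃ N, ∀ n ≥ N, f^[n] a = b) (n : ℕ) : f^[n] a ≤ b := by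
  obtain ⟨N, hN⟩ := h
  rw [← hN (max n N) (le_max_right n N)]
  exact monotone_iterate_of_id_le hf (le_max_left n N) a

section Revision

variable {I : Type*} {v w u : PVal I} {x y : I} {α : ℝ}

lemma le_Tcp (w : PVal I) : w ≤ Tcp w :=
  ⟨fun _ => le_max_left _ _, fun _ => le_max_left _ _, fun _ _ => le_max_left _ _⟩

structure BackedBy (v : PVal I) (x : I) (α : ℝ) (w : PVal I) : Prop where
  p : ∀ s ≠ x, α ≤ w.p x s → α ≤ v.p x s
  nt : ∀ s ≠ x, α ≤ w.nt s → α ≤ v.p x s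
  t : α ≤ w.t x → ∀ s ≠ x, α ≤ v.p x s

lemma backedBy_self (ht : v.t x < α) (hnt : ∀ s ≠ x, v.nt s < α) : BackedBy v x α v where
  p _ _ := id
  nt s hs h := absurd h (hnt s hs).not_ge
  t h := absurd h ht.not_ge

variable [Finite I]

lemma finite_cut (w : PVal I) (X : Finset I) : {b | ∃ r ∈ X, ∃ s, s ∉ X ∧ b = w.p r s}.Finite :=
  (Set.finite_range fun q : I × I => w.p q.1 q.2).subset
    (by rintro _ ⟨r, -, s, -, rfl⟩; exact ⟨(r, s), rfl⟩)

lemma t_le_Tcp_nt (w : PVal I) {r : I} (hry : r ≠ y) : w.t r ≤ (Tcp w).nt y := by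
  refine le_trans ?_ ((le_max_left _ _).trans (le_max_right _ _))
  exact le_sup0_s18 finite_setOf_exists_and_eq.bddAbove ⟨r, hry, rfl⟩

lemma inf1_cut_le_Tcp_nt (w : PVal I) {X : Finset I} (hX : X.Nonempty) (hyX : y ∉ X) :
    inf1 {b | ∃ r ∈ X, ∃ s, s ∉ X ∧ b = w.p r s} ≤ (Tcp w).nt y := by
  refine le_trans ?_ ((le_max_right _ _).trans (le_max_right _ _))
  exact le_sup0_s18 finite_setOf_exists_and_and_eq.bddAbove ⟨X, hX, hyX, rfl⟩

lemma maximin_le_Tcp_nt (w : PVal I) (hyx : y ≠ x) :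
    inf1 {b | ∃ s, s ≠ y ∧ b = w.p y s} ≤ (Tcp w).nt x := by
  have hcut : {b | ∃ r ∈ ({y} : Finset I), ∃ s, s ∉ ({y} : Finset I) ∧ b = w.p r s} =
      {b | ∃ s, s ≠ y ∧ b = w.p y s} := by
    ext; simp
  simpa [hcut] using inf1_cut_le_Tcp_nt w (Finset.singleton_nonempty y) (by simpa using hyx.symm)

lemma exists_clause_of_le_Tcp_t (hα : 0 < α) (h : α ≤ (Tcp w).t x) :
    α ≤ w.t x ∨ ∃ X : Finset I, x ∈ X ∧ (∀ r ∈ X, r ≠ x → α ≤ w.nt r) ∧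
      ∀ r ∈ X, ∀ s ∉ X, α ≤ w.p r s := by
  refine (le_max_iff.1 h).imp_right fun h => ?_
  obtain ⟨_, ⟨X, hxX, rfl⟩, hX⟩ := exists_le_of_le_sup0 finite_setOf_exists_and_eq hα h
  refine ⟨X, hxX, fun r hr hrx => ?_, fun r hr s hs => ?_⟩
  · exact (le_min_iff.1 hX).1.trans
      (inf1_le_s18 finite_setOf_exists_and_and_eq.bddBelow ⟨r, hr, hrx, rfl⟩)
  · exact (le_min_iff.1 hX).2.trans (inf1_le_s18 (finite_cut w X).bddBelow ⟨r, hr, s, hs, rfl⟩)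

lemma exists_clause_of_le_Tcp_nt (hα : 0 < α) (h : α ≤ (Tcp w).nt y) :
    α ≤ w.nt y ∨ (∃ r ≠ y, α ≤ w.t r) ∨
      ∃ X : Finset I, X.Nonempty ∧ y ∉ X ∧ ∀ r ∈ X, ∀ s ∉ X, α ≤ w.p r s := by
  refine (le_max_iff.1 h).imp_right fun h => (le_max_iff.1 h).imp (fun h => ?_) (fun h => ?_)
  · obtain ⟨_, ⟨r, hry, rfl⟩, hr⟩ := exists_le_of_le_sup0 finite_setOf_exists_and_eq hα h
    exact ⟨r, hry, hr⟩
  · obtain ⟨_, ⟨X, hX, hyX, rfl⟩, hcut⟩ := exists_le_of_le_sup0 finite_setOf_exists_and_and_eq hα h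
    exact ⟨X, hX, hyX, fun r hr s hs =>
      hcut.trans (inf1_le_s18 (finite_cut w X).bddBelow ⟨r, hr, s, hs, rfl⟩)⟩

lemma exists_clause_of_le_Tcp_p (hα : 0 < α) {z : I} (h : α ≤ (Tcp w).p y z) :
    α ≤ w.p y z ∨ ∃ X : Finset I, z ∈ X ∧ y ∉ X ∧
      ((∀ r ∈ X, α ≤ w.nt r) ∨ ∃ s ∉ X, α ≤ w.t s) ∧
      ∀ r ∈ X, ∀ s ∉ X, ¬(r = z ∧ s = y) → α ≤ w.p r s := by
  refine (le_max_iff.1 h).imp_right fun h => ?_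
  obtain ⟨_, ⟨X, hzX, hyX, rfl⟩, hX⟩ := exists_le_of_le_sup0 finite_setOf_exists_and_and_eq hα h
  obtain ⟨hacc, hcut⟩ := le_min_iff.1 hX
  refine ⟨X, hzX, hyX, (le_max_iff.1 hacc).imp (fun h r hr => ?_) (fun h => ?_),
    fun r hr s hs hrs => ?_⟩
  · exact h.trans (inf1_le_s18 finite_setOf_exists_and_eq.bddBelow ⟨r, hr, rfl⟩)
  · obtain ⟨_, ⟨s, hs, rfl⟩, hs'⟩ := exists_le_of_le_sup0 finite_setOf_exists_and_eq hα h
    exact ⟨s, hs, hs'⟩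
  · refine hcut.trans (inf1_le_s18 ((finite_cut w X).subset ?_).bddBelow ⟨r, hr, s, hs, hrs, rfl⟩)
    rintro _ ⟨r, hr, s, hs, -, rfl⟩
    exact ⟨r, hr, s, hs, rfl⟩

lemma eq_of_le_t_of_le_isFixedPt (hu : IsFixedPt Tcp u) (hwu : w ≤ u) (hy : u.nt y < α)
    {r : I} (hr : α ≤ w.t r) : r = y := by
  by_contra hry
  have hle := t_le_Tcp_nt u hry
  rw [hu.eq] at hle
  exact hr.not_gt (((hwu.1 r).trans hle).trans_lt hy)

lemma exists_p_lt_of_le_isFixedPt (hu : IsFixedPt Tcp u) (hwu : w ≤ u) (hy : u.nt y < α)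
    {X : Finset I} (hX : X.Nonempty) (hyX : y ∉ X) : ∃ r ∈ X, ∃ s ∉ X, w.p r s < α := by
  have hcut := inf1_cut_le_Tcp_nt u hX hyX
  rw [hu.eq] at hcut
  obtain ⟨r, hr⟩ := hX
  have hne : {b | ∃ r ∈ X, ∃ s, s ∉ X ∧ b = u.p r s}.Nonempty := ⟨_, r, hr, y, hyX, rfl⟩
  obtain ⟨_, ⟨r, hr, s, hs, rfl⟩, hlt⟩ := exists_lt_of_inf1_lt hne (hcut.trans_lt hy)
  exact ⟨r, hr, s, hs, (hwu.2.2 r s).trans_lt hlt⟩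

namespace BackedBy

lemma Tcp_t (hα : 0 < α) (h : BackedBy v x α w) :
    α ≤ (Tcp w).t x → ∀ s ≠ x, α ≤ v.p x s := by
  intro hacc s hs
  rcases exists_clause_of_le_Tcp_t hα hacc with hacc | ⟨X, hxX, hnt, hp⟩
  · exact h.t hacc s hs
  by_cases hsX : s ∈ X
  · exact h.nt s hs (hnt s hsX hs)
  · exact h.p s hs (hp x hxX s hsX)

lemma Tcp_p (hα : 0 < α) (hu : IsFixedPt Tcp u) (hwu : w ≤ u) (hx : u.nt x < α)
    (h : BackedBy v x α w) : ∀ s ≠ x, α ≤ (Tcp w).p x s → α ≤ v.p x s := by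
  intro s hs hacc
  rcases exists_clause_of_le_Tcp_p hα hacc with hacc | ⟨X, hsX, -, hnt | ⟨z, -, hz⟩, -⟩
  · exact h.p s hs hacc
  · exact h.nt s hs (hnt s hsX)
  · obtain rfl := eq_of_le_t_of_le_isFixedPt hu hwu hx hz
    exact h.t hz s hs

lemma Tcp_nt (hα : 0 < α) (hu : IsFixedPt Tcp u) (hwu : w ≤ u) (hx : u.nt x < α)
    (h : BackedBy v x α w) : ∀ s ≠ x, α ≤ (Tcp w).nt s → α ≤ v.p x s := by
  intro s hs hacc
  rcases exists_clause_of_le_Tcp_nt hα hacc with hacc | ⟨r, -, hr⟩ | ⟨X, hX, hsX, hp⟩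
  · exact h.nt s hs hacc
  · obtain rfl := eq_of_le_t_of_le_isFixedPt hu hwu hx hr
    exact h.t hr s hs
  by_cases hxX : x ∈ X
  · exact h.p s hs (hp x hxX s hsX)
  · obtain ⟨r, hr, s', hs', hlt⟩ := exists_p_lt_of_le_isFixedPt hu hwu hx hX hxX
    exact absurd (hp r hr s' hs') hlt.not_ge

lemma Tcp_of_le_isFixedPt (hα : 0 < α) (hu : IsFixedPt Tcp u) (hwu : w ≤ u)
    (hx : u.nt x < α) (h : BackedBy v x α w) : BackedBy v x α (Tcp w) :=
  ⟨h.Tcp_p hα hu hwu hx, h.Tcp_nt hα hu hwu hx, h.Tcp_t hα⟩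

end BackedBy

end Revision

theorem stmt18_general {I : Type*} [Fintype I]
    (v : PVal I)
    (ht : ∀ x, v.t x = 0) (hnt : ∀ x, v.nt x = 0)
    (vstar : PVal I) (hstar : ∃ N : ℕ, ∀ n ≥ N, Tcp^[n] v = vstar)
    (x : I) (hwin : vstar.nt x < vstar.t x) :
    ∀ y : I, y ≠ x →
      inf1 {b : ℝ | ∃ s, s ≠ y ∧ b = v.p y s} <
      inf1 {b : ℝ | ∃ s, s ≠ x ∧ b = v.p x s} := by
  have hfix : IsFixedPt Tcp vstar := isFixedPt_of_iterate_eventually_eq hstar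
  have hle : ∀ n, Tcp^[n] v ≤ vstar := iterate_le_of_eventually_eq le_Tcp hstar
  have hα : 0 < vstar.t x := by
    have hnt_x : v.nt x ≤ vstar.nt x := (hle 0).2.1 x
    linarith [hnt x]
  have hbacked : ∀ n, BackedBy v x (vstar.t x) (Tcp^[n] v) := by
    intro n
    induction n with
    | zero => exact backedBy_self (by rwa [ht]) fun s _ => by rwa [hnt]
    | succ n ih =>
      rw [iterate_succ_apply']
      exact ih.Tcp_of_le_isFixedPt hα hfix (hle n) hwin
  have hdom : ∀ s ≠ x, vstar.t x ≤ v.p x s := by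
    obtain ⟨N, hN⟩ := hstar
    exact (hbacked N).t (by rw [hN N le_rfl])
  intro y hyx
  calc inf1 {b | ∃ s, s ≠ y ∧ b = v.p y s} ≤ (Tcp v).nt x := maximin_le_Tcp_nt v hyx
    _ ≤ vstar.nt x := (hle 1).2.1 x
    _ < vstar.t x := hwin
    _ ≤ inf1 {b | ∃ s, s ≠ x ∧ b = v.p x s} :=
      le_inf1 ⟨_, y, hyx, rfl⟩ (by rintro _ ⟨s, hs, rfl⟩; exact hdom s hs)

/-- If there is a unique comprehensive prominence winner `x` (i.e. `t_x` is
accepted by the upper revised valuation), then `x` is also the unique maximin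
winner. -/
theorem stmt18 {I : Type*} [Fintype I] [DecidableEq I]
    (hcard : 2 ≤ Fintype.card I)
    (v : PVal I)
    (hbox : ∀ x y : I, x ≠ y → v.p x y ∈ Set.Icc (0:ℝ) 1)
    (ht : ∀ x, v.t x = 0) (hnt : ∀ x, v.nt x = 0)
    (vstar : PVal I) (hstar : ∃ N : ℕ, ∀ n ≥ N, Tcp^[n] v = vstar)
    (x : I) (hwin : vstar.nt x < vstar.t x) :
    ∀ y : I, y ≠ x →
      inf1 {b : ℝ | ∃ s, s ≠ y ∧ b = v.p y s} <
      inf1 {b : ℝ | ∃ s, s ≠ x ∧ b = v.p x s} :=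
  stmt18_general v ht hnt vstar hstar x hwin
end
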